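/- For any randomized static strategy given by a probability vector f ∈ ℝⁿ and any admissible exchange rate sequence e, the ratio A(e)/∑_i f_i e_i = (max_i e_i)/(∑_i f_i e_i) is at most max_{1≤j≤n} α^j/(∑_i f_i (e_j)_i) over the downturn sequences e_j; hence the supremum of the competitive ratio over all admissible sequences is attained (as a supremum) on the finite set of downturns. -/

import Mathlib

/-!
Let `j` be an index where `e` is maximal. Admissibility bounds `e j` by `e i * α ^ (j - i)` for
`i ≤ j` and by `e i * β ^ (i - j)` for `i > j`; both say `e j * (e_j)_i ≤ α ^ j * e i`, where `e_j`
is the downturn at `j`. Averaging against `f` gives `e j / ∑ f_i e_i ≤ α ^ j / ∑ f_i (e_j)_i`.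
-/

open Finset

noncomputable def downturn (α β : ℝ) (j i : ℕ) : ℝ :=
  if i ≤ j then α ^ i else α ^ j / β ^ (i - j)

lemma downturn_pos {α β : ℝ} (hα : 0 < α) (hβ : 0 < β) (j i : ℕ) : 0 < downturn α β j i := by
  unfold downturn
  split <;> positivity

section Admissible

variable {e : ℕ → ℝ} {n : ℕ}

lemma le_mul_pow_sub_of_le_pred_mul {α : ℝ} (hα : 0 ≤ α)
    (h : ∀ i ∈ Icc 1 n, e i ≤ e (i - 1) * α) {a b : ℕ} (hab : a ≤ b) (hb : b ≤ n) :
    e b ≤ e a * α ^ (b - a) := by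
  induction b, hab using Nat.le_induction with
  | base => simp
  | succ b hab ih =>
    calc e (b + 1) ≤ e b * α := by simpa using h (b + 1) (mem_Icc.mpr ⟨by omega, hb⟩)
      _ ≤ e a * α ^ (b - a) * α := by gcongr; exact ih (by omega)
      _ = e a * α ^ (b + 1 - a) := by rw [mul_assoc, ← pow_succ, Nat.sub_add_comm hab]

lemma le_mul_pow_sub_of_pred_le_mul {β : ℝ} (hβ : 0 ≤ β)
    (h : ∀ i ∈ Icc 1 n, e (i - 1) ≤ e i * β) {a b : ℕ} (hab : a ≤ b) (hb : b ≤ n) :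
    e a ≤ e b * β ^ (b - a) := by
  induction b, hab using Nat.le_induction with
  | base => simp
  | succ b hab ih =>
    calc e a ≤ e b * β ^ (b - a) := ih (by omega)
      _ ≤ e (b + 1) * β * β ^ (b - a) := by
        gcongr; simpa using h (b + 1) (mem_Icc.mpr ⟨by omega, hb⟩)
      _ = e (b + 1) * β ^ (b + 1 - a) := by
        rw [mul_assoc, ← pow_succ', Nat.sub_add_comm hab]

lemma mul_downturn_le {α β : ℝ} (hα : 0 < α) (hβ : 0 < β)
    (hup : ∀ i ∈ Icc 1 n, e i ≤ e (i - 1) * α) (hdown : ∀ i ∈ Icc 1 n, e (i - 1) ≤ e i * β)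
    {i j : ℕ} (hi : i ≤ n) (hj : j ≤ n) :
    e j * downturn α β j i ≤ α ^ j * e i := by
  unfold downturn
  split_ifs with hij
  · calc e j * α ^ i ≤ e i * α ^ (j - i) * α ^ i := by
          gcongr; exact le_mul_pow_sub_of_le_pred_mul hα.le hup hij hj
      _ = α ^ j * e i := by rw [mul_assoc, ← pow_add, Nat.sub_add_cancel hij, mul_comm]
  · rw [← mul_div_assoc, div_le_iff₀ (by positivity)]
    calc e j * α ^ j ≤ e i * β ^ (i - j) * α ^ j := by
          gcongr; exact le_mul_pow_sub_of_pred_le_mul hβ.le hdown (by omega) hi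
      _ = α ^ j * e i * β ^ (i - j) := by ring

end Admissible

lemma sum_mul_pos_of_sum_pos {ι : Type*} {s : Finset ι} {f w : ι → ℝ}
    (hf0 : ∀ i ∈ s, 0 ≤ f i) (hf : 0 < ∑ i ∈ s, f i) (hw : ∀ i ∈ s, 0 < w i) :
    0 < ∑ i ∈ s, f i * w i := by
  obtain ⟨i, hi, hfi⟩ := exists_lt_of_sum_lt (f := fun _ => 0) (g := f) (by simpa using hf)
  exact sum_pos' (fun k hk => mul_nonneg (hf0 k hk) (hw k hk).le)
    ⟨i, hi, mul_pos hfi (hw i hi)⟩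

theorem sup_attained_on_downturns (n : ℕ) (hn : 2 ≤ n) (α β : ℝ) (hα : 1 < α) (hβ : 1 < β)
    (f : ℕ → ℝ) (hf0 : ∀ i ∈ Finset.Icc 1 n, 0 ≤ f i)
    (hf1 : ∑ i ∈ Finset.Icc 1 n, f i = 1)
    (d : ℕ → ℕ → ℝ)
    (hd : ∀ j i, d j i = if i ≤ j then α ^ i else α ^ j / β ^ (i - j))
    (e : ℕ → ℝ) (hpos : ∀ i ∈ Finset.Icc 1 n, 0 < e i)
    (hadm : ∀ i ∈ Finset.Icc 1 n, e (i - 1) / β ≤ e i ∧ e i ≤ e (i - 1) * α) :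
    (Finset.Icc 1 n).sup' (Finset.nonempty_Icc.mpr (by omega)) e /
        (∑ i ∈ Finset.Icc 1 n, f i * e i) ≤
      (Finset.Icc 1 n).sup' (Finset.nonempty_Icc.mpr (by omega))
        (fun j => α ^ j / ∑ i ∈ Finset.Icc 1 n, f i * d j i) := by
  obtain rfl : d = downturn α β := funext₂ hd
  have hα0 : 0 < α := by linarith
  have hβ0 : 0 < β := by linarith
  have hdown : ∀ i ∈ Icc 1 n, e (i - 1) ≤ e i * β :=
    fun i hi => (div_le_iff₀ hβ0).mp (hadm i hi).1
  have hf : 0 < ∑ i ∈ Icc 1 n, f i := by rw [hf1]; exact one_pos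
  obtain ⟨j, hj, hje⟩ := exists_mem_eq_sup' (s := Icc 1 n) (nonempty_Icc.mpr (by omega)) e
  have hS := sum_mul_pos_of_sum_pos hf0 hf hpos
  have hT := sum_mul_pos_of_sum_pos hf0 hf fun i _ => downturn_pos hα0 hβ0 j i
  have hcompare : e j * ∑ i ∈ Icc 1 n, f i * downturn α β j i ≤
      α ^ j * ∑ i ∈ Icc 1 n, f i * e i := by
    simp only [mul_sum, mul_left_comm _ (f _)]
    exact sum_le_sum fun i hi => mul_le_mul_of_nonneg_left
      (mul_downturn_le hα0 hβ0 (fun k hk => (hadm k hk).2) hdown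
        (mem_Icc.mp hi).2 (mem_Icc.mp hj).2) (hf0 i hi)
  rw [hje]
  calc e j / ∑ i ∈ Icc 1 n, f i * e i ≤ α ^ j / ∑ i ∈ Icc 1 n, f i * downturn α β j i := by
        rwa [div_le_div_iff₀ hS hT]
    _ ≤ _ := le_sup' (fun j => α ^ j / ∑ i ∈ Icc 1 n, f i * downturn α β j i) hj
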